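/- Let G ∈ ℝ^{n×d} with columns g_1,…,g_d, and let i_1,…,i_d be a permutation of {1,…,d} sorting the columns so that ‖g_{i_1}‖ ≥ ‖g_{i_2}‖ ≥ … ≥ ‖g_{i_d}‖. Let G_k consist of the top-k columns g_{i_1},…,g_{i_k}, and define S_G(R) = ‖Gᵀ v_R‖²/(|R|+λ) for λ > 0. Then sup over subsets R of |S_G(R) − S_{G_k}(R)| ≤ Σ_{j=k+1}^d ‖g_{i_j}‖². -/

import Mathlib

open Matrix

/-- Spectral (operator) norm of a real matrix, as a map between Euclidean spaces. -/
noncomputable def opNorm {m n : Type*} [Fintype m] [Fintype n] [DecidableEq n]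
    (A : Matrix m n ℝ) : ℝ :=
  ‖LinearMap.toContinuousLinearMap (Matrix.toEuclideanLin A)‖

/-- Indicator vector of a subset `R ⊆ {1,…,n}`. -/
def ind {n : ℕ} (R : Finset (Fin n)) : Fin n → ℝ := fun i => if i ∈ R then 1 else 0

/-- Scoring function `S_G(R) = ‖Gᵀ v_R‖² / (|R| + λ)`. -/
noncomputable def score {n : ℕ} {d : Type*} [Fintype d]
    (G : Matrix (Fin n) d ℝ) (R : Finset (Fin n)) (lam : ℝ) : ℝ :=
  (∑ j, (Matrix.mulVec Gᵀ (ind R) j) ^ 2) / (R.card + lam)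

/-!
Dropping columns of `G` only deletes nonnegative terms `⟨g_j, v_R⟩²` from the numerator of
`S_G(R)`, and by Cauchy–Schwarz each of them is at most `‖g_j‖² |R| ≤ ‖g_j‖² (|R| + λ)`.
-/

open Finset

section Score

variable {n : ℕ} {ι κ : Type*}

theorem sum_sq_ind (R : Finset (Fin n)) : ∑ r, ind R r ^ 2 = #R := by
  simp [ind, ite_pow]

theorem sq_transpose_mulVec_ind_le (G : Matrix (Fin n) ι ℝ) (R : Finset (Fin n)) (j : ι) :
    (Gᵀ *ᵥ ind R) j ^ 2 ≤ (∑ r, G r j ^ 2) * #R := by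
  rw [← sum_sq_ind R]
  exact sum_mul_sq_le_sq_mul_sq univ (fun r => G r j) (ind R)

theorem sum_sq_transpose_mulVec_ind_div_le (G : Matrix (Fin n) ι ℝ) (R : Finset (Fin n))
    {lam : ℝ} (hlam : 0 < lam) (s : Finset ι) :
    (∑ j ∈ s, (Gᵀ *ᵥ ind R) j ^ 2) / (#R + lam) ≤ ∑ j ∈ s, ∑ r, G r j ^ 2 := by
  rw [div_le_iff₀ (by positivity), sum_mul]
  gcongr with j
  calc (Gᵀ *ᵥ ind R) j ^ 2 ≤ (∑ r, G r j ^ 2) * #R := sq_transpose_mulVec_ind_le G R j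
    _ ≤ (∑ r, G r j ^ 2) * (#R + lam) := by gcongr; linarith

variable [Fintype ι] [DecidableEq ι] [Fintype κ]

theorem score_sub_score_submatrix (G : Matrix (Fin n) ι ℝ) (e : κ ↪ ι)
    (R : Finset (Fin n)) (lam : ℝ) :
    score G R lam - score (G.submatrix id e) R lam =
      (∑ j ∈ (univ.map e)ᶜ, (Gᵀ *ᵥ ind R) j ^ 2) / (#R + lam) := by
  have h_kept : ∑ j, ((G.submatrix id e)ᵀ *ᵥ ind R) j ^ 2 =
      ∑ j ∈ univ.map e, (Gᵀ *ᵥ ind R) j ^ 2 := by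
    rw [sum_map]
    rfl
  rw [score, score, h_kept, ← sum_add_sum_compl (univ.map e), add_div]
  ring

theorem abs_score_sub_score_submatrix_le (G : Matrix (Fin n) ι ℝ) (e : κ ↪ ι)
    (R : Finset (Fin n)) {lam : ℝ} (hlam : 0 < lam) :
    |score G R lam - score (G.submatrix id e) R lam| ≤
      ∑ j ∈ (univ.map e)ᶜ, ∑ r, G r j ^ 2 := by
  rw [score_sub_score_submatrix, abs_of_nonneg (by positivity)]
  exact sum_sq_transpose_mulVec_ind_div_le G R hlam _

end Score

theorem compl_map_castLEEmb_trans {d k : ℕ} (hk : k ≤ d) (σ : Equiv.Perm (Fin d)) :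
    (univ.map ((Fin.castLEEmb hk).trans σ.toEmbedding))ᶜ =
      (univ.filter fun j : Fin d => k ≤ (j : ℕ)).map σ.toEmbedding := by
  ext j
  obtain ⟨i, rfl⟩ := σ.surjective j
  simp only [mem_compl, mem_map, mem_univ, true_and, mem_filter, Function.Embedding.trans_apply,
    Equiv.toEmbedding_apply, Fin.castLEEmb_apply, σ.injective.eq_iff, exists_eq_right, not_exists]
  exact ⟨fun h => not_lt.1 fun hi => h ⟨i, hi⟩ rfl,
    fun hi a ha => (ha ▸ a.isLt : (i : ℕ) < k).not_ge hi⟩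

theorem stmt_4_general {n d k : ℕ} (hk : k ≤ d) (G : Matrix (Fin n) (Fin d) ℝ)
    (σ : Equiv.Perm (Fin d))
    (Gk : Matrix (Fin n) (Fin k) ℝ)
    (hGk : Gk = G.submatrix id (fun j => σ (Fin.castLE hk j)))
    (lam : ℝ) (hlam : 0 < lam) (R : Finset (Fin n)) :
    |score G R lam - score Gk R lam| ≤
      ∑ j ∈ Finset.univ.filter (fun j : Fin d => k ≤ (j : ℕ)), ∑ r, (G r (σ j)) ^ 2 := by
  have h := abs_score_sub_score_submatrix_le G ((Fin.castLEEmb hk).trans σ.toEmbedding) R hlam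
  rw [compl_map_castLEEmb_trans, sum_map] at h
  subst hGk
  exact h

/-- Top Outputs sketching guarantee: keeping the `k` columns of largest Euclidean
norm changes the scoring function by at most the sum of squared norms of the
discarded columns. Columns are sorted via the permutation `σ` so that
`‖g_{σ 0}‖ ≥ ‖g_{σ 1}‖ ≥ …`. -/
theorem stmt_4 {n d k : ℕ} (hk : k ≤ d) (G : Matrix (Fin n) (Fin d) ℝ)
    (σ : Equiv.Perm (Fin d))
    (hsort : ∀ j j' : Fin d, j ≤ j' →
      Real.sqrt (∑ r, (G r (σ j')) ^ 2) ≤ Real.sqrt (∑ r, (G r (σ j)) ^ 2))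
    (Gk : Matrix (Fin n) (Fin k) ℝ)
    (hGk : Gk = G.submatrix id (fun j => σ (Fin.castLE hk j)))
    (lam : ℝ) (hlam : 0 < lam) (R : Finset (Fin n)) :
    |score G R lam - score Gk R lam| ≤
      ∑ j ∈ Finset.univ.filter (fun j : Fin d => k ≤ (j : ℕ)), ∑ r, (G r (σ j)) ^ 2 :=
  stmt_4_general hk G σ Gk hGk lam hlam R
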